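/- Let β ⪯^w α in ℝ₊ⁿ, B̄ a survival function with values in (0,1), ψ a decreasing convex function on [0,1), and A ∈ [1/n,1] a constant. Then A·Σᵢψ(1 − B̄(x)^{βᵢ}) ≤ A·Σᵢψ(1 − B̄(x)^{αᵢ}) for every x; consequently, for any decreasing φ, φ(A·Σᵢψ(1 − B̄(x)^{βᵢ})) ≥ φ(A·Σᵢψ(1 − B̄(x)^{αᵢ})). -/

import Mathlib

/-- Partial sum of the `k` smallest components (via the sorting permutation). -/
noncomputable def psum (n k : ℕ) (a : Fin n → ℝ) : ℝ :=
  ∑ i ∈ Finset.univ.filter (fun i : Fin n => (i : ℕ) < k), a (Tuple.sort a i)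

/-!
For `c = B̄(x) ∈ (0,1)` the map `f t = ψ(1 - c^t)` is convex and decreasing on `[0, ∞)`,
being a decreasing convex function of the concave increasing map `t ↦ 1 - c^t`. The sum
inequality is then the Tomić–Weyl inequality for weak majorization: sort both tuples
increasingly, bound `f(bᵢ) - f(aᵢ)` by `gᵢ (bᵢ - aᵢ)` with `gᵢ` the right derivative of `f`
at `bᵢ`, and note that the `gᵢ` are nonpositive and increasing while the partial sums of
`b - a` are nonnegative, so Abel summation makes `∑ gᵢ (bᵢ - aᵢ)` nonpositive.
-/

open Finset Set

theorem Fin.sum_filter_castSucc_lt {M : Type*} [AddCommMonoid M] {n k : ℕ} (hk : k ≤ n)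
    (d : Fin (n + 1) → M) :
    ∑ i ∈ univ.filter fun i : Fin n => (i : ℕ) < k, d i.castSucc =
      ∑ i ∈ univ.filter fun i : Fin (n + 1) => (i : ℕ) < k, d i := by
  simp only [Finset.sum_filter, Fin.sum_univ_castSucc, Fin.val_castSucc, Fin.val_last,
    if_neg (Nat.not_lt.2 hk), add_zero]

theorem Fin.sum_mul_nonpos_of_monotone {R : Type*} [CommRing R] [LinearOrder R]
    [IsOrderedRing R] :
    ∀ {n : ℕ} {g d : Fin n → R}, Monotone g → (∀ i, g i ≤ 0) →
      (∀ k ≤ n, 0 ≤ ∑ i ∈ univ.filter fun i : Fin n => (i : ℕ) < k, d i) → ∑ i, g i * d i ≤ 0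
  | 0, _, _, _, _, _ => by simp
  | n + 1, g, d, hg, hg₀, hd => by
    have hlow : ∑ i : Fin n, (g i.castSucc - g (last n)) * d i.castSucc ≤ 0 :=
      Fin.sum_mul_nonpos_of_monotone
        (fun i j hij => sub_le_sub_right (hg (castSucc_le_castSucc_iff.2 hij)) _)
        (fun i => sub_nonpos.2 (hg (le_last _)))
        (fun k hk => (Fin.sum_filter_castSucc_lt hk d).symm ▸ hd k (by omega))
    have htop : g (last n) * ∑ i, d i ≤ 0 :=
      mul_nonpos_of_nonpos_of_nonneg (hg₀ _) <| by
        simpa only [filter_true_of_mem fun (i : Fin (n + 1)) _ => i.is_lt] using hd (n + 1) le_rfl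
    calc ∑ i, g i * d i
        = ∑ i : Fin n, (g i.castSucc - g (last n)) * d i.castSucc + g (last n) * ∑ i, d i := by
          simp only [Fin.sum_univ_castSucc (fun i => g i * d i), Fin.sum_univ_castSucc d,
            sub_mul, Finset.sum_sub_distrib, mul_add, Finset.mul_sum]
          ring
      _ ≤ 0 := add_nonpos hlow htop

theorem ConvexOn.rightDeriv_mul_sub_le {S : Set ℝ} {f : ℝ → ℝ} {x y : ℝ} (hf : ConvexOn ℝ S f)
    (hx : x ∈ interior S) (hy : y ∈ S) :
    derivWithin f (Ioi x) x * (y - x) ≤ f y - f x := by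
  rcases lt_trichotomy x y with hxy | rfl | hyx
  · have h := hf.rightDeriv_le_slope_of_mem_interior hx hy hxy
    rwa [slope_def_field, le_div_iff₀ (sub_pos.2 hxy)] at h
  · simp
  · have hslope := hf.slope_le_leftDeriv_of_mem_interior hy hx hyx
    have hleft := hf.leftDeriv_le_rightDeriv_of_mem_interior hx
    rw [slope_def_field, div_le_iff₀ (sub_pos.2 hyx)] at hslope
    nlinarith

theorem AntitoneOn.rightDeriv_nonpos {S : Set ℝ} {f : ℝ → ℝ} {x : ℝ} (hf : AntitoneOn f S)
    (hx : x ∈ interior S) : derivWithin f (Ioi x) x ≤ 0 := by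
  rw [← derivWithin_inter (mem_interior_iff_mem_nhds.1 hx)]
  exact (hf.mono inter_subset_right).derivWithin_nonpos

theorem ConvexOn.sum_le_sum_of_monotone_of_partial_sums_le {S : Set ℝ} {f : ℝ → ℝ}
    (hf : ConvexOn ℝ S f) (hf' : AntitoneOn f S) {n : ℕ} {a b : Fin n → ℝ} (ha : ∀ i, a i ∈ S)
    (hb : ∀ i, b i ∈ interior S) (hb' : Monotone b)
    (hab : ∀ k ≤ n, ∑ i ∈ univ.filter fun i : Fin n => (i : ℕ) < k, a i ≤
      ∑ i ∈ univ.filter fun i : Fin n => (i : ℕ) < k, b i) :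
    ∑ i, f (b i) ≤ ∑ i, f (a i) := by
  set g := fun i => derivWithin f (Ioi (b i)) (b i)
  have hsupport : ∀ i, f (b i) - f (a i) ≤ g i * (b i - a i) := fun i => by
    have := hf.rightDeriv_mul_sub_le (hb i) (ha i)
    linarith
  have habel : ∑ i, g i * (b i - a i) ≤ 0 :=
    Fin.sum_mul_nonpos_of_monotone
      (fun i j hij => hf.monotoneOn_rightDeriv (hb i) (hb j) (hb' hij))
      (fun i => hf'.rightDeriv_nonpos (hb i))
      (fun k hk => by simpa only [Finset.sum_sub_distrib, sub_nonneg] using hab k hk)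
  have hsum := Finset.sum_le_sum fun i (_ : i ∈ Finset.univ) => hsupport i
  rw [Finset.sum_sub_distrib] at hsum
  linarith

section OneSubRpow

variable {ψ : ℝ → ℝ} {c : ℝ}

theorem mapsTo_one_sub_rpow (hc₀ : 0 < c) (hc₁ : c < 1) :
    MapsTo (fun t : ℝ => 1 - c ^ t) (Ici (0 : ℝ)) (Ico 0 1) := fun t ht =>
  ⟨sub_nonneg.2 (Real.rpow_le_one hc₀.le hc₁.le ht),
    sub_lt_self _ (Real.rpow_pos_of_pos hc₀ t)⟩

theorem ConvexOn.comp_one_sub_rpow (hψ : ConvexOn ℝ (Ico 0 1) ψ) (hψ' : AntitoneOn ψ (Ico 0 1))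
    (hc₀ : 0 < c) (hc₁ : c < 1) : ConvexOn ℝ (Ici (0 : ℝ)) fun t => ψ (1 - c ^ t) := by
  have himage := (mapsTo_one_sub_rpow hc₀ hc₁).image_subset
  have hconcave : ConcaveOn ℝ (Ici (0 : ℝ)) fun t : ℝ => 1 - c ^ t :=
    (concaveOn_const 1 (convex_Ici 0)).sub
      ((convexOn_rpow_left hc₀).subset (subset_univ _) (convex_Ici 0))
  have hconvex : Convex ℝ ((fun t : ℝ => 1 - c ^ t) '' Ici 0) :=
    (isPreconnected_Ici.image _
      (continuous_const.sub (Real.continuous_const_rpow hc₀.ne')).continuousOn).ordConnected.convex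
  exact (hψ.subset himage hconvex).comp_concaveOn hconcave (hψ'.mono himage)

theorem AntitoneOn.comp_one_sub_rpow (hψ' : AntitoneOn ψ (Ico 0 1)) (hc₀ : 0 < c)
    (hc₁ : c < 1) :
    AntitoneOn (fun t => ψ (1 - c ^ t)) (Ici (0 : ℝ)) := fun _ hs _ ht hst =>
  hψ' (mapsTo_one_sub_rpow hc₀ hc₁ hs) (mapsTo_one_sub_rpow hc₀ hc₁ ht)
    (sub_le_sub_left (Real.rpow_le_rpow_of_exponent_ge hc₀ hc₁.le hst) 1)

end OneSubRpow

/-- The key inequality chain in the proof of Theorem 3.1: if `β ⪯^w α`,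
`B̄` takes values in `(0,1)`, `ψ` is decreasing and convex on `[0,1)`, and
`A ∈ [1/n,1]`, then `A Σ ψ(1-B̄(x)^{βᵢ}) ≤ A Σ ψ(1-B̄(x)^{αᵢ})`, and hence
any decreasing `φ` reverses the inequality. -/
theorem phr_sum_inequality
    (n : ℕ) (α β : Fin n → ℝ)
    (hα : ∀ i, 0 < α i) (hβ : ∀ i, 0 < β i)
    (hmaj : ∀ k ≤ n, psum n k α ≤ psum n k β)
    (Bbar : ℝ → ℝ) (hB : ∀ x, Bbar x ∈ Set.Ioo (0:ℝ) 1)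
    (ψ : ℝ → ℝ)
    (hψanti : AntitoneOn ψ (Set.Ico 0 1))
    (hψconv : ConvexOn ℝ (Set.Ico 0 1) ψ)
    (A : ℝ) (hA : 1 / (n : ℝ) ≤ A ∧ A ≤ 1) :
    ∀ x : ℝ,
      (A * ∑ i, ψ (1 - Bbar x ^ β i) ≤ A * ∑ i, ψ (1 - Bbar x ^ α i)) ∧
        (∀ φ : ℝ → ℝ, Antitone φ →
          φ (A * ∑ i, ψ (1 - Bbar x ^ α i)) ≤
            φ (A * ∑ i, ψ (1 - Bbar x ^ β i))) := by
  intro x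
  obtain ⟨hc₀, hc₁⟩ := hB x
  have hsum : ∑ i, ψ (1 - Bbar x ^ β i) ≤ ∑ i, ψ (1 - Bbar x ^ α i) := by
    rw [← Equiv.sum_comp (Tuple.sort α) (fun i => ψ (1 - Bbar x ^ α i)),
      ← Equiv.sum_comp (Tuple.sort β) (fun i => ψ (1 - Bbar x ^ β i))]
    refine (hψconv.comp_one_sub_rpow hψanti hc₀ hc₁).sum_le_sum_of_monotone_of_partial_sums_le
      (hψanti.comp_one_sub_rpow hc₀ hc₁) (fun i => (hα _).le) (fun i => ?_)
      (Tuple.monotone_sort β) hmaj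
    rw [interior_Ici]
    exact hβ _
  have hA₀ : 0 ≤ A := (by positivity : (0 : ℝ) ≤ 1 / n).trans hA.1
  have hscaled := mul_le_mul_of_nonneg_left hsum hA₀
  exact ⟨hscaled, fun φ hφ => hφ hscaled⟩
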